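/- For g ∈ G_n and d ∈ ℤ_{≥0}^n set b̃′_{(g,d)} = θ_{n−k+1}^{d_{n−k+1}}⋯θ_n^{d_n} · b̃_{(g,(d_1,…,d_{n−k},0,…,0))}. Then the set {b̃′_{(g,d)} : g ∈ G_n, d ∈ ℤ_{≥0}^n} (taken as elements of ℂ[𝓑_n*]) is a ℂ-vector space basis of ℂ[𝓑_n*]. -/

import Mathlib

open scoped Classical
open MvPolynomial Finset

noncomputable section

/-- Nonempty subsets of `[n]`, the index set of the variables `y_S`. -/
abbrev NES (n : ℕ) := {S : Finset (Fin n) // S.Nonempty}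

/-- The polynomial ring `ℂ[y_S]`. -/
abbrev YRing (n : ℕ) := MvPolynomial (NES n) ℂ

/-- The polynomial ring `ℂ[x_1, …, x_n]`. -/
abbrev XRing (n : ℕ) := MvPolynomial (Fin n) ℂ

/-- The variable `y_F`, with junk value `1` when `F = ∅`. -/
def Yv {n : ℕ} (F : Finset (Fin n)) : YRing n :=
  if h : F.Nonempty then X ⟨F, h⟩ else 1

/-- `θ_i = Σ_{|S| = i} y_S^r`. -/
def theta (n r i : ℕ) : YRing n :=
  ∑ S ∈ univ.filter (fun S : NES n => S.1.card = i), X S ^ r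

/-- Stanley–Reisner generators `y_S y_T` for incomparable `S, T`. -/
def srSet (n : ℕ) : Set (YRing n) :=
  {p | ∃ S T : NES n, ¬ S.1 ⊆ T.1 ∧ ¬ T.1 ⊆ S.1 ∧ p = X S * X T}

/-- The generators `θ_{n-k+1}, …, θ_n`. -/
def thetaSet (n k r : ℕ) : Set (YRing n) :=
  {p | ∃ i : ℕ, n - k + 1 ≤ i ∧ i ≤ n ∧ p = theta n r i}

/-- Products `y_{S_1} ⋯ y_{S_m}` over multichains `S_1 ⊆ ⋯ ⊆ S_m` of length `m`. -/
def chainSet (n m : ℕ) : Set (YRing n) :=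
  {p | ∃ S : Fin m → NES n, (∀ i j : Fin m, i ≤ j → (S i).1 ⊆ (S j).1) ∧ p = ∏ i, X (S i)}

def SRideal (n : ℕ) : Ideal (YRing n) := Ideal.span (srSet n)

def STideal (n k r : ℕ) : Ideal (YRing n) := Ideal.span (srSet n ∪ thetaSet n k r)

/-- The ideal `𝓙_{n,k}`. -/
def Jideal (n k r : ℕ) : Ideal (YRing n) :=
  Ideal.span (srSet n ∪ thetaSet n k r ∪ chainSet n (k * r))

/-- The ideal `𝓘_{n,k}`. -/
def Iideal (n k r : ℕ) : Ideal (YRing n) :=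
  Ideal.span (srSet n ∪ thetaSet n k r ∪ chainSet n (k * r + 1))

/-- An `r`-colored word of length `m` on distinct letters from `[n]`. -/
structure CWord (n r m : ℕ) where
  letter : Fin m → Fin n
  inj : Function.Injective letter
  color : Fin m → Fin r

/-- `r`-colored permutations of `[n]`, i.e. the group `G(r,1,n)` as a set. -/
abbrev CPerm (n r : ℕ) := CWord n r n

/-- The order on colored letters: `(a,c) < (b,d)` iff `c > d`, or `c = d` and `a < b`. -/
def colLt {n r : ℕ} (a b : Fin n × Fin r) : Prop :=
  b.2 < a.2 ∨ (a.2 = b.2 ∧ a.1 < b.1)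

/-- The descent set of a colored word (0-indexed positions). -/
def DesSet {n r m : ℕ} (w : CWord n r m) : Finset (Fin m) :=
  univ.filter fun i => ∃ j : Fin m, (j : ℕ) = (i : ℕ) + 1 ∧
    colLt (w.letter j, w.color j) (w.letter i, w.color i)

def desNum {n r m : ℕ} (w : CWord n r m) : ℕ := (DesSet w).card

/-- `maj(w) = Σ colors + r · Σ_{i ∈ Des(w)} i` (1-based positions). -/
def majW {n r m : ℕ} (w : CWord n r m) : ℕ :=
  (∑ i, (w.color i : ℕ)) + r * ∑ i ∈ DesSet w, ((i : ℕ) + 1)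

/-- The set of the first `t` letters of `w`. -/
def pref {n r m : ℕ} (w : CWord n r m) (t : ℕ) : Finset (Fin n) :=
  univ.filter fun a => ∃ l : Fin m, (l : ℕ) < t ∧ w.letter l = a

/-- The exponent `m_i = c_i - c_{i+1} + r·[i ∈ Des(g)]` (and `m_last = c_last`). -/
def mExp {n r m : ℕ} (w : CWord n r m) (i : Fin m) : ℕ :=
  (((w.color i : ℤ) - (if h : (i : ℕ) + 1 < m then (w.color ⟨(i : ℕ) + 1, h⟩ : ℤ) else 0))
    + (if i ∈ DesSet w then (r : ℤ) else 0)).toNat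

/-- The descent monomial `b̃_w`. -/
def btw {n r m : ℕ} (w : CWord n r m) : YRing n :=
  ∏ i : Fin m, Yv (pref w ((i : ℕ) + 1)) ^ mExp w i

/-- `b̃_{(g,d)} = b̃_g · Π_i y_{T_i}^{r d_i}`. -/
def btd {n r : ℕ} (g : CPerm n r) (d : Fin n → ℕ) : YRing n :=
  btw g * ∏ i : Fin n, Yv (pref g ((i : ℕ) + 1)) ^ (r * d i)

/-- `b̃_{(w,λ)} = b̃_w · Π_j y_{S_{λ_j}}^r` for a list `λ` of parts. -/
def btl {n r m : ℕ} (w : CWord n r m) (lam : List ℕ) : YRing n :=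
  btw w * (lam.map fun p => Yv (pref w p) ^ r).prod

/-- `r`-colored ordered set partitions of `[n]` with `k` blocks, encoded as pairs `(g, λ)`. -/
structure OPIdx (n k r : ℕ) where
  g : CPerm n r
  lam : List ℕ
  sorted : lam.Pairwise (· ≥ ·)
  pos : ∀ p ∈ lam, 1 ≤ p
  parts_le : ∀ p ∈ lam, p ≤ n - k
  len : lam.length + desNum g + 1 ≤ k

def btOP {n k r : ℕ} (o : OPIdx n k r) : YRing n := btl o.g o.lam

/-- `k`-dimensional `G_n`-faces, encoded as triples `(Z, w, λ)`. -/
structure FIdx (n k r : ℕ) where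
  Z : Finset (Fin n)
  cardZ : Z.card ≤ n - k
  w : CWord n r (n - Z.card)
  mem : ∀ j, w.letter j ∉ Z
  lam : List ℕ
  sorted : lam.Pairwise (· ≥ ·)
  pos : ∀ p ∈ lam, 1 ≤ p
  parts_le : ∀ p ∈ lam, p ≤ n - Z.card - k
  len : lam.length + desNum w + 1 ≤ k

/-- The monomial `b̃_{(Z,g,λ)}`. -/
def btF {n k r : ℕ} (f : FIdx n k r) : YRing n :=
  Yv f.Z ^ (k * r - (btl f.w f.lam).totalDegree) *
    ((∏ i : Fin (n - f.Z.card), Yv (pref f.w ((i : ℕ) + 1) ∪ f.Z) ^ mExp f.w i) *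
      (f.lam.map fun p => Yv (pref f.w p ∪ f.Z) ^ r).prod)

/-- The transfer map `φ : ℂ[y_S] → ℂ[x_n]`, `y_S ↦ Π_{i ∈ S} x_i`. -/
def phi (n : ℕ) : YRing n →ₐ[ℂ] XRing n := aeval fun S : NES n => ∏ i ∈ S.1, X i

/-- An element of `G(r,1,n)`: a permutation together with `r`-th roots of unity. -/
structure GElem (n r : ℕ) where
  perm : Equiv.Perm (Fin n)
  scalar : Fin n → ℂ
  root : ∀ i, scalar i ^ r = 1

/-- The action of `G(r,1,n)` on `ℂ[x_n]` by linear substitution. -/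
def actX {n r : ℕ} (g : GElem n r) : XRing n →ₐ[ℂ] XRing n :=
  aeval fun i => g.scalar i • X (g.perm i)

/-- The action of `G(r,1,n)` on `ℂ[y_S]`, `g · y_S = α · y_{g(S)}`. -/
def actY {n r : ℕ} (g : GElem n r) : YRing n →ₐ[ℂ] YRing n :=
  aeval fun S : NES n =>
    (∏ i ∈ S.1, g.scalar i) • X (⟨S.1.image g.perm, S.2.image _⟩ : NES n)

/-- An exponent vector is a multichain if its support is a chain of subsets. -/
def IsChainE {n : ℕ} (e : NES n →₀ ℕ) : Prop :=
  ∀ S ∈ e.support, ∀ T ∈ e.support, S.1 ⊆ T.1 ∨ T.1 ⊆ S.1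

/-- `μ(y)`: the multiset of sizes (with multiplicity) of a monomial with exponents `e`. -/
def muE {n : ℕ} (e : NES n →₀ ℕ) : Multiset ℕ :=
  e.sum fun S m => Multiset.replicate m S.1.card

/-- Sum of the `j` largest entries of a multiset of naturals. -/
def psum (a : Multiset ℕ) (j : ℕ) : ℕ := (((a.sort (· ≤ ·)).reverse).take j).sum

/-- Dominance order on partitions (encoded as multisets) of the same number. -/
def domLE (a b : Multiset ℕ) : Prop := a.sum = b.sum ∧ ∀ j, psum a j ≤ psum b j

/-- Strict dominance order. -/
def domLT (a b : Multiset ℕ) : Prop := domLE a b ∧ a ≠ b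

/-- Order on the variables: `y_S > y_T` iff `|S| > |T|`, or `|S| = |T|` and
`min (S \ T) < min (T \ S)`. -/
def varGt {n : ℕ} (S T : NES n) : Prop :=
  T.1.card < S.1.card ∨
    (S.1.card = T.1.card ∧ ∃ a ∈ S.1 \ T.1, ∀ b ∈ T.1 \ S.1, a < b)

/-- The graded lexicographic order on monomials (exponent vectors) of `ℂ[y_S]`. -/
def monLt {n : ℕ} (e f : NES n →₀ ℕ) : Prop :=
  (e.sum fun _ m => m) < (f.sum fun _ m => m) ∨
    ((e.sum fun _ m => m) = (f.sum fun _ m => m) ∧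
      ∃ S, e S < f S ∧ ∀ T, varGt T S → e T = f T)

/-- `e` is the leading monomial of `p`. -/
def IsLM {n : ℕ} (p : YRing n) (e : NES n →₀ ℕ) : Prop :=
  e ∈ p.support ∧ ∀ f ∈ p.support, f ≠ e → monLt f e

/-- The ideal of leading monomials of nonzero elements of `I`. -/
def LMideal {n : ℕ} (I : Ideal (YRing n)) : Ideal (YRing n) :=
  Ideal.span {q | ∃ p e, p ∈ I ∧ p ≠ 0 ∧ IsLM p e ∧ q = (monomial e 1 : YRing n)}

/-- `e_d(x_1^r, …, x_n^r)`. -/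
def esymmR (n r d : ℕ) : XRing n :=
  ∑ t ∈ (univ : Finset (Fin n)).powersetCard d, ∏ i ∈ t, X i ^ r

/-- The ideal `J_{n,k}` of Chan–Rhoades. -/
def Jx (n k r : ℕ) : Ideal (XRing n) :=
  Ideal.span ({p | ∃ i : Fin n, p = X i ^ (k * r)} ∪
    {p | ∃ d : ℕ, n - k + 1 ≤ d ∧ d ≤ n ∧ p = esymmR n r d})

/-- The ideal `I_{n,k}` of Chan–Rhoades. -/
def Ix (n k r : ℕ) : Ideal (XRing n) :=
  Ideal.span ({p | ∃ i : Fin n, p = X i ^ (k * r + 1)} ∪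
    {p | ∃ d : ℕ, n - k + 1 ≤ d ∧ d ≤ n ∧ p = esymmR n r d})

/-- `b̃′_{(g,d)} = θ_{n-k+1}^{d_{n-k+1}} ⋯ θ_n^{d_n} · b̃_{(g,(d_1,…,d_{n-k},0,…,0))}`. -/
def btp (n k r : ℕ) (g : CPerm n r) (d : Fin n → ℕ) : YRing n :=
  (∏ i : Fin n, if n - k ≤ (i : ℕ) then theta n r ((i : ℕ) + 1) ^ d i else 1) *
    btd g (fun i => if (i : ℕ) < n - k then d i else 0)

/-!
The multichain monomials form a basis of `ℂ[𝓑_n*]`, and `(g, d) ↦ b̃_{(g,d)}` is a bijection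
onto them: a multichain is extended to a complete flag by sorting each of its blocks
increasingly, the colors are the tail sums of its exponents modulo `r`, and `d` records the
remaining multiples of `r`. Expanding the `θ`-factors of `b̃′_{(g,d)}` modulo `𝓑_n*`, every
surviving term other than `b̃_{(g,d)}` trades some set `T_i` of the flag of `g` for another
`i`-set compatible with the support of `b̃_{(g,d)}`. Since `g` ascends between consecutive
sets of that support, such a set has strictly smaller binary weight `Σ_{x ∈ S} 2^(n-1-x)` than
`T_i`, so the transition matrix to the multichain basis is unitriangular.
-/

namespace Module.Basis

variable {ι R M : Type*} [Ring R] [AddCommGroup M] [Module R M] (b : Module.Basis ι R M)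
  {W : ι → ℕ} {f : ι → M}

lemma repr_apply_eq_of_sub_mem_span
    (hf : ∀ i, f i - b i ∈ Submodule.span R (b '' {j | W j < W i})) {i j : ι} (hij : W j ≤ W i) :
    b.repr (f j) i = if j = i then 1 else 0 := by
  have hi : i ∉ (b.repr (f j - b j)).support := fun h =>
    (not_lt.2 hij) (b.repr_support_subset_of_mem_span _ (hf j) h)
  rwa [Finsupp.notMem_support_iff, map_sub, Finsupp.sub_apply, sub_eq_zero, b.repr_self,
    Finsupp.single_apply] at hi

lemma linearIndependent_of_sub_mem_span
    (hf : ∀ i, f i - b i ∈ Submodule.span R (b '' {j | W j < W i})) : LinearIndependent R f := by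
  rw [linearIndependent_iff']
  intro s g hsum i hi
  by_contra hgi
  obtain ⟨i₀, hi₀, hmax⟩ := (s.filter (g · ≠ 0)).exists_max_image W ⟨i, by simp [hi, hgi]⟩
  rw [Finset.mem_filter] at hi₀
  have hcoeff : ∀ j ∈ s, g j * b.repr (f j) i₀ = if j = i₀ then g j else 0 := by
    intro j hj
    by_cases hgj : g j = 0
    · simp [hgj]
    · rw [b.repr_apply_eq_of_sub_mem_span hf (hmax j (by simp [hj, hgj]))]
      split_ifs <;> simp
  have := congr_arg (fun x => b.repr x i₀) hsum
  simp only [map_sum, map_smul, Finsupp.coe_finsetSum, Finset.sum_apply, Finsupp.smul_apply,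
    smul_eq_mul, map_zero, Finsupp.coe_zero, Pi.zero_apply] at this
  rw [Finset.sum_congr rfl hcoeff, Finset.sum_ite_eq' s i₀ g, if_pos hi₀.1] at this
  exact hi₀.2 this

lemma top_le_span_of_sub_mem_span
    (hf : ∀ i, f i - b i ∈ Submodule.span R (b '' {j | W j < W i})) :
    ⊤ ≤ Submodule.span R (Set.range f) := by
  have hspan : ∀ w i, W i < w → b i ∈ Submodule.span R (Set.range f) := by
    intro w
    induction w with
    | zero => simp
    | succ w ih =>
      intro i hi
      have hlower : Submodule.span R (b '' {j | W j < W i}) ≤ Submodule.span R (Set.range f) :=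
        Submodule.span_le.2 (by rintro _ ⟨j, hj, rfl⟩; exact ih j (by simp at hj; omega))
      rw [← sub_sub_cancel (f i) (b i)]
      exact sub_mem (Submodule.subset_span ⟨i, rfl⟩) (hlower (hf i))
  rw [← b.span_eq, Submodule.span_le]
  rintro _ ⟨i, rfl⟩
  exact hspan _ i (lt_add_one _)

theorem exists_basis_eq_of_sub_mem_span
    (hf : ∀ i, f i - b i ∈ Submodule.span R (b '' {j | W j < W i})) :
    ∃ c : Module.Basis ι R M, ⇑c = f :=
  ⟨.mk (b.linearIndependent_of_sub_mem_span hf) (b.top_le_span_of_sub_mem_span hf),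
    Module.Basis.coe_mk _ _⟩

end Module.Basis

lemma Fin.lt_of_forall_lt_succ {α : Type*} [Preorder α] {m : ℕ} {f : Fin m → α} {p q : Fin m}
    (hpq : p < q)
    (h : ∀ t : Fin m, ∀ ht : (t : ℕ) + 1 < m, p ≤ t → (t : ℕ) < q → f t < f ⟨t + 1, ht⟩) :
    f p < f q := by
  obtain ⟨q, hq⟩ := q
  induction q with
  | zero => exact absurd hpq (by simp [Fin.lt_def])
  | succ q ih =>
    have hqm : q < m := by omega
    rw [Fin.lt_def] at hpq
    rcases (show (p : ℕ) ≤ q by simp at hpq; omega).lt_or_eq with hlt | heq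
    · exact (ih hqm hlt fun t ht hpt htq => h t ht hpt (by simp at htq ⊢; omega)).trans
        (h ⟨q, hqm⟩ hq (Fin.le_def.2 hlt.le) (by simp))
    · obtain rfl : p = ⟨q, hqm⟩ := Fin.ext heq
      exact h _ hq le_rfl (by simp)

section StanleyReisner

variable {n : ℕ}

lemma not_isChainE_iff {e : NES n →₀ ℕ} :
    ¬ IsChainE e ↔ ∃ S T : NES n, ¬ S.1 ⊆ T.1 ∧ ¬ T.1 ⊆ S.1 ∧
      Finsupp.single S 1 + Finsupp.single T 1 ≤ e := by
  simp only [IsChainE, not_forall, not_or, Finsupp.mem_support_iff, exists_prop]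
  constructor
  · rintro ⟨S, hS, T, hT, hST, hTS⟩
    have hne : S ≠ T := by rintro rfl; exact hST subset_rfl
    refine ⟨S, T, hST, hTS, fun U => ?_⟩
    rcases eq_or_ne U S with rfl | hUS <;> rcases eq_or_ne U T with rfl | hUT <;>
      simp_all [Nat.one_le_iff_ne_zero]
  · rintro ⟨S, T, hST, hTS, hle⟩
    have hne : S ≠ T := by rintro rfl; exact hST subset_rfl
    refine ⟨S, ?_, T, ?_, hST, hTS⟩
    · have := hle S; simp [hne] at this; omega
    · have := hle T; simp [hne.symm] at this; omega

lemma mem_SRideal_iff {p : YRing n} : p ∈ SRideal n ↔ ∀ e ∈ p.support, ¬ IsChainE e := by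
  have hsr : srSet n = (fun e => monomial e (1 : ℂ)) ''
      {e | ∃ S T : NES n, ¬ S.1 ⊆ T.1 ∧ ¬ T.1 ⊆ S.1 ∧
        e = Finsupp.single S 1 + Finsupp.single T 1} := by
    ext p
    simp only [srSet, Set.mem_ofPred_eq, Set.mem_image]
    constructor
    · rintro ⟨S, T, hST, hTS, rfl⟩
      exact ⟨_, ⟨S, T, hST, hTS, rfl⟩, by rw [X, X, monomial_mul, one_mul]⟩
    · rintro ⟨_, ⟨S, T, hST, hTS, rfl⟩, rfl⟩
      exact ⟨S, T, hST, hTS, by rw [X, X, monomial_mul, one_mul]⟩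
  rw [SRideal, hsr, mem_ideal_span_monomial_image]
  refine forall₂_congr fun e _ => ?_
  rw [not_isChainE_iff]
  simp only [Set.mem_ofPred_eq]
  constructor
  · rintro ⟨_, ⟨S, T, hST, hTS, rfl⟩, hle⟩
    exact ⟨S, T, hST, hTS, hle⟩
  · rintro ⟨S, T, hST, hTS, hle⟩
    exact ⟨_, ⟨S, T, hST, hTS, rfl⟩, hle⟩

lemma mk_monomial_eq_zero {e : NES n →₀ ℕ} (he : ¬ IsChainE e) (c : ℂ) :
    Ideal.Quotient.mk (SRideal n) (monomial e c) = 0 := by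
  rw [Ideal.Quotient.eq_zero_iff_mem, mem_SRideal_iff]
  intro f hf
  rwa [Finset.mem_singleton.1 (support_monomial_subset hf)]

lemma linearIndependent_mk_monomial_chain :
    LinearIndependent ℂ fun e : {e : NES n →₀ ℕ // IsChainE e} =>
      Ideal.Quotient.mk (SRideal n) (monomial e.1 1) := by
  rw [linearIndependent_iff']
  intro s c hsum e he
  have hmem : ∑ f ∈ s, c f • (monomial f.1 1 : YRing n) ∈ SRideal n := by
    rw [← Ideal.Quotient.eq_zero_iff_mem, map_sum, ← hsum]
    rfl
  by_contra hce
  refine mem_SRideal_iff.1 hmem e.1 ?_ e.2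
  rw [mem_support_iff, coeff_sum, Finset.sum_eq_single e]
  · simpa using hce
  · intro f _ hfe
    rw [coeff_smul, coeff_monomial, if_neg (Subtype.coe_ne_coe.2 hfe), smul_zero]
  · exact fun h => absurd he h

lemma top_le_span_mk_monomial_chain :
    ⊤ ≤ Submodule.span ℂ (Set.range fun e : {e : NES n →₀ ℕ // IsChainE e} =>
      Ideal.Quotient.mk (SRideal n) (monomial e.1 1)) := by
  rintro x -
  obtain ⟨p, rfl⟩ := Ideal.Quotient.mk_surjective x
  rw [p.as_sum, map_sum]
  refine Submodule.sum_mem _ fun e _ => ?_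
  by_cases he : IsChainE e
  · rw [← mul_one (coeff e p), ← smul_eq_mul, ← smul_monomial]
    change coeff e p • Ideal.Quotient.mk (SRideal n) (monomial e 1) ∈ _
    exact Submodule.smul_mem _ _ (Submodule.subset_span ⟨⟨e, he⟩, rfl⟩)
  · rw [mk_monomial_eq_zero he]
    exact Submodule.zero_mem _

variable (n) in
def chainBasis : Module.Basis {e : NES n →₀ ℕ // IsChainE e} ℂ (YRing n ⧸ SRideal n) :=
  .mk linearIndependent_mk_monomial_chain top_le_span_mk_monomial_chain

lemma chainBasis_apply (e : {e : NES n →₀ ℕ // IsChainE e}) :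
    chainBasis n e = Ideal.Quotient.mk (SRideal n) (monomial e.1 1) :=
  Module.Basis.mk_apply _ _ _

end StanleyReisner

section Words

variable {n r m : ℕ}

lemma CWord.ext {w w' : CWord n r m} (hl : w.letter = w'.letter) (hc : w.color = w'.color) :
    w = w' := by
  cases w
  cases w'
  simp_all

@[simp] lemma mem_pref {w : CWord n r m} {t : ℕ} {a : Fin n} :
    a ∈ pref w t ↔ ∃ l : Fin m, (l : ℕ) < t ∧ w.letter l = a := by
  simp [pref]

lemma letter_mem_pref {w : CWord n r m} {l : Fin m} {t : ℕ} :
    w.letter l ∈ pref w t ↔ (l : ℕ) < t := by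
  simp [w.inj.eq_iff]

lemma pref_mono (w : CWord n r m) {s t : ℕ} (h : s ≤ t) : pref w s ⊆ pref w t := by
  intro a
  simp only [mem_pref]
  exact fun ⟨l, hl, hla⟩ => ⟨l, by omega, hla⟩

lemma card_pref (w : CWord n r m) {t : ℕ} (ht : t ≤ m) : (pref w t).card = t := by
  have : pref w t = (univ.filter fun l : Fin m => (l : ℕ) < t).map ⟨w.letter, w.inj⟩ := by
    ext a
    simp
  rw [this, card_map, Fin.card_filter_val_lt, min_eq_right ht]

/-- `0` past the end of the word, as in the convention `m_n = c_n` of `mExp`. -/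
def colorAt (w : CWord n r m) (t : ℕ) : ℕ := if h : t < m then w.color ⟨t, h⟩ else 0

lemma colorAt_lt (w : CWord n r m) (hr : 0 < r) (t : ℕ) : colorAt w t < r := by
  unfold colorAt
  split_ifs
  exacts [(w.color _).isLt, hr]

lemma mem_DesSet_iff {w : CWord n r m} {i : Fin m} (h : (i : ℕ) + 1 < m) :
    i ∈ DesSet w ↔ colorAt w i < colorAt w (i + 1) ∨
      (colorAt w (i + 1) = colorAt w i ∧ w.letter ⟨i + 1, h⟩ < w.letter i) := by
  simp only [DesSet, colLt, mem_filter, mem_univ, true_and, colorAt, dif_pos i.isLt, dif_pos h,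
    Fin.lt_def, ← Fin.val_inj]
  constructor
  · rintro ⟨j, hj, hlt⟩
    obtain rfl : j = ⟨i + 1, h⟩ := Fin.ext hj
    exact hlt
  · exact fun hlt => ⟨⟨i + 1, h⟩, rfl, hlt⟩

lemma notMem_DesSet {w : CWord n r m} {i : Fin m} (h : ¬ (i : ℕ) + 1 < m) : i ∉ DesSet w := by
  simp only [DesSet, mem_filter, mem_univ, true_and, not_exists, not_and]
  intro j hj
  omega

@[simp] lemma colorAt_val (w : CWord n r m) (i : Fin m) : colorAt w i = w.color i :=
  dif_pos i.isLt

/-- The truncation `Int.toNat` in `mExp` is never active. -/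
lemma mExp_add_colorAt (w : CWord n r m) (i : Fin m) :
    mExp w i + colorAt w (i + 1) = colorAt w i + if i ∈ DesSet w then r else 0 := by
  have hmExp : (mExp w i : ℤ) = ((colorAt w i : ℤ) - colorAt w (i + 1) +
      if i ∈ DesSet w then (r : ℤ) else 0).toNat := by
    simp only [mExp, colorAt_val]
    unfold colorAt
    split_ifs <;> simp
  have hc : colorAt w i < r := by simp
  by_cases h : (i : ℕ) + 1 < m
  · have hc' := colorAt_lt w (by omega) (i + 1)
    by_cases hd : i ∈ DesSet w
    · rw [if_pos hd] at hmExp ⊢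
      rcases (mem_DesSet_iff h).1 hd with hd | ⟨hd, -⟩ <;> omega
    · rw [if_neg hd] at hmExp ⊢
      have := mt (mem_DesSet_iff h).2 hd
      omega
  · have hnext : colorAt w (i + 1) = 0 := dif_neg h
    rw [if_neg (notMem_DesSet h)] at hmExp ⊢
    omega

lemma mExp_le (w : CWord n r m) (i : Fin m) : mExp w i ≤ r := by
  have := mExp_add_colorAt w i
  have hc : colorAt w i < r := by simp
  by_cases h : (i : ℕ) + 1 < m
  · by_cases hd : i ∈ DesSet w
    · rw [if_pos hd] at this
      rcases (mem_DesSet_iff h).1 hd with hd | ⟨hd, -⟩ <;> omega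
    · rw [if_neg hd] at this
      omega
  · rw [if_neg (notMem_DesSet h)] at this
    omega

lemma letter_lt_letter_succ_of_mExp_eq_zero {w : CWord n r m} {i : Fin m}
    (h : (i : ℕ) + 1 < m) (hm : mExp w i = 0) : w.letter i < w.letter ⟨i + 1, h⟩ := by
  have hspec := mExp_add_colorAt w i
  have hc := colorAt_lt w (by have := (w.color i).pos; omega) (i + 1)
  have hdes := mem_DesSet_iff (w := w) h
  have hne : w.letter i ≠ w.letter ⟨i + 1, h⟩ := fun he => by
    simpa [Fin.ext_iff] using w.inj he
  split_ifs at hspec with hd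
  · omega
  · exact lt_of_le_of_ne (not_lt.1 fun hlt => hd (hdes.2 (Or.inr ⟨by omega, hlt⟩))) hne

lemma letter_succ_lt_letter_of_mExp_eq {w : CWord n r m} {i : Fin m} (hm : mExp w i = r) :
    ∃ h : (i : ℕ) + 1 < m, w.letter ⟨i + 1, h⟩ < w.letter i := by
  have hspec := mExp_add_colorAt w i
  have hc : colorAt w i < r := by simp
  by_cases h : (i : ℕ) + 1 < m
  · refine ⟨h, ?_⟩
    have hdes := mem_DesSet_iff (w := w) h
    split_ifs at hspec with hd
    · exact (hdes.1 hd).resolve_left (by omega) |>.2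
    · omega
  · rw [if_neg (notMem_DesSet h)] at hspec
    omega

lemma mExp_cast_zmod (w : CWord n r m) (i : Fin m) :
    (mExp w i : ZMod r) = colorAt w i - colorAt w (i + 1) := by
  rw [eq_sub_iff_add_eq, ← Nat.cast_add, mExp_add_colorAt]
  split_ifs <;> simp

end Words

section Flags

variable {n r : ℕ}

/-- The variable `y_{T_{i+1}}`, for `T_{i+1}` the set of the first `i + 1` letters of `g`. -/
def flag (g : CPerm n r) (i : Fin n) : NES n :=
  ⟨pref g (i + 1), ⟨g.letter i, letter_mem_pref.2 (Nat.lt_succ_self _)⟩⟩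

@[simp] lemma card_flag (g : CPerm n r) (i : Fin n) : (flag g i).1.card = i + 1 :=
  card_pref g i.isLt

lemma flag_injective (g : CPerm n r) : Function.Injective (flag g) := fun i j h =>
  Fin.ext (by simpa using congr_arg (fun S : NES n => S.1.card) h)

lemma letter_mem_flag {g : CPerm n r} {p i : Fin n} : g.letter p ∈ (flag g i).1 ↔ p ≤ i := by
  rw [flag, letter_mem_pref, Fin.le_def]
  omega

lemma flag_subset_flag {g : CPerm n r} {i j : Fin n} (h : i ≤ j) : (flag g i).1 ⊆ (flag g j).1 :=
  pref_mono g (by rw [Fin.le_def] at h; omega)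

def btdExp (g : CPerm n r) (d : Fin n → ℕ) : NES n →₀ ℕ :=
  ∑ i, Finsupp.single (flag g i) (mExp g i + r * d i)

lemma btdExp_flag (g : CPerm n r) (d : Fin n → ℕ) (i : Fin n) :
    btdExp g d (flag g i) = mExp g i + r * d i := by
  rw [btdExp, Finsupp.finsetSum_apply, Finset.sum_eq_single i (fun j _ hj => ?_) (by simp),
    Finsupp.single_eq_same]
  exact Finsupp.single_eq_of_ne' ((flag_injective g).ne hj)

lemma btdExp_of_notMem_range {g : CPerm n r} (d : Fin n → ℕ) {S : NES n}
    (hS : S ∉ Set.range (flag g)) : btdExp g d S = 0 := by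
  simp only [btdExp, Finsupp.finsetSum_apply]
  exact Finset.sum_eq_zero fun i _ => Finsupp.single_eq_of_ne' fun h => hS ⟨i, h⟩

lemma btd_eq_monomial (g : CPerm n r) (d : Fin n → ℕ) : btd g d = monomial (btdExp g d) 1 := by
  have hY : ∀ i : Fin n, Yv (pref g (i + 1)) = X (flag g i) := fun i => dif_pos (flag g i).2
  simp only [btd, _root_.btw, hY, ← Finset.prod_mul_distrib, X_pow_eq_monomial, monomial_mul,
    one_mul, ← Finsupp.single_add, btdExp, monomial_sum_one]

lemma btdExp_add (g : CPerm n r) (d d' : Fin n → ℕ) :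
    btdExp g (d + d') = btdExp g d + ∑ i, Finsupp.single (flag g i) (r * d' i) := by
  simp only [btdExp, ← Finset.sum_add_distrib, ← Finsupp.single_add, Pi.add_apply, mul_add,
    add_assoc]

def FlagSupported (w : CPerm n r) (e : NES n →₀ ℕ) : Prop :=
  ∀ S ∈ e.support, S ∈ Set.range (flag w)

lemma flagSupported_btdExp (g : CPerm n r) (d : Fin n → ℕ) : FlagSupported g (btdExp g d) :=
  fun _ hS => by_contra fun h => Finsupp.mem_support_iff.1 hS (btdExp_of_notMem_range d h)

lemma FlagSupported.isChainE {w : CPerm n r} {e : NES n →₀ ℕ} (he : FlagSupported w e) :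
    IsChainE e := by
  intro S hS T hT
  obtain ⟨i, rfl⟩ := he S hS
  obtain ⟨j, rfl⟩ := he T hT
  exact (le_total i j).imp flag_subset_flag flag_subset_flag

def rank (e : NES n →₀ ℕ) (x : Fin n) : ℕ := #{S ∈ e.support | x ∈ S.1}

lemma FlagSupported.rank_letter {w : CPerm n r} {e : NES n →₀ ℕ} (he : FlagSupported w e)
    (p : Fin n) : rank e (w.letter p) = #{t | p ≤ t ∧ e (flag w t) ≠ 0} := by
  rw [rank, ← Finset.card_image_of_injective _ (flag_injective w)]
  congr 1
  ext S
  simp only [mem_filter, mem_image, mem_univ, true_and, Finsupp.mem_support_iff]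
  constructor
  · rintro ⟨hS, hp⟩
    obtain ⟨t, rfl⟩ := he S (Finsupp.mem_support_iff.2 hS)
    exact ⟨t, ⟨letter_mem_flag.1 hp, hS⟩, rfl⟩
  · rintro ⟨t, ⟨hpt, ht⟩, rfl⟩
    exact ⟨ht, letter_mem_flag.2 hpt⟩

lemma FlagSupported.rank_letter_eq_add {w : CPerm n r} {e : NES n →₀ ℕ} (he : FlagSupported w e)
    {p : Fin n} (hp : (p : ℕ) + 1 < n) :
    rank e (w.letter p) = rank e (w.letter ⟨p + 1, hp⟩) + if e (flag w p) = 0 then 0 else 1 := by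
  rw [he.rank_letter, he.rank_letter]
  have hsucc : ∀ t : Fin n, (⟨p + 1, hp⟩ : Fin n) ≤ t ↔ p ≤ t ∧ t ≠ p := fun t => by
    simp only [Fin.le_def, ne_eq, Fin.ext_iff]
    omega
  split_ifs with h0
  · rw [add_zero]
    congr 1
    ext t
    simp only [mem_filter, mem_univ, true_and, hsucc]
    constructor
    · rintro ⟨hpt, ht⟩
      exact ⟨⟨hpt, by rintro rfl; exact ht h0⟩, ht⟩
    · exact fun ⟨⟨hpt, _⟩, ht⟩ => ⟨hpt, ht⟩
  · have hins : univ.filter (fun t => p ≤ t ∧ e (flag w t) ≠ 0) =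
        insert p (univ.filter fun t => ⟨p + 1, hp⟩ ≤ t ∧ e (flag w t) ≠ 0) := by
      ext t
      simp only [mem_filter, mem_univ, true_and, mem_insert, hsucc]
      constructor
      · rintro ⟨hpt, ht⟩
        by_cases htp : t = p
        · exact Or.inl htp
        · exact Or.inr ⟨⟨hpt, htp⟩, ht⟩
      · rintro (rfl | ⟨⟨hpt, _⟩, ht⟩)
        exacts [⟨le_rfl, h0⟩, ⟨hpt, ht⟩]
    rw [hins, Finset.card_insert_of_notMem (by simp [hsucc])]

def tailSum (e : NES n →₀ ℕ) (t : ℕ) : ℕ := ∑ S with t < S.1.card, e S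

lemma tailSum_of_le (e : NES n →₀ ℕ) {t : ℕ} (ht : n ≤ t) : tailSum e t = 0 :=
  Finset.sum_eq_zero fun S hS => by
    have := S.1.card_le_univ
    simp at hS this
    omega

lemma FlagSupported.tailSum_eq_add {w : CPerm n r} {e : NES n →₀ ℕ} (he : FlagSupported w e)
    (i : Fin n) : tailSum e i = e (flag w i) + tailSum e (i + 1) := by
  have hsplit : tailSum e i = ∑ S with S.1.card = (i : ℕ) + 1, e S + tailSum e (i + 1) := by
    rw [tailSum, tailSum, ← Finset.sum_union]
    · congr 1
      ext S
      simp only [mem_filter, mem_univ, true_and, mem_union]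
      omega
    · exact Finset.disjoint_filter.2 fun S _ h1 h2 => by omega
  rw [hsplit, Finset.sum_eq_single (flag w i)]
  · intro S hS hne
    by_contra hS0
    obtain ⟨j, rfl⟩ := he S (Finsupp.mem_support_iff.2 hS0)
    simp only [mem_filter, mem_univ, true_and, card_flag] at hS
    exact hne (congr_arg (flag w) (Fin.ext (by omega)))
  · simp

end Flags

section ChainWord

variable {n r : ℕ}

def sortKey (e : NES n →₀ ℕ) (x : Fin n) : ℕᵒᵈ ×ₗ Fin n := toLex (OrderDual.toDual (rank e x), x)

lemma sortKey_injective (e : NES n →₀ ℕ) : Function.Injective (sortKey e) := fun x y h => by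
  simpa [sortKey] using congr_arg (fun k => (ofLex k).2) h

lemma sortKey_lt_sortKey {e : NES n →₀ ℕ} {x y : Fin n} :
    sortKey e x < sortKey e y ↔ rank e y < rank e x ∨ (rank e x = rank e y ∧ x < y) := by
  simp [sortKey, Prod.Lex.toLex_lt_toLex]

/-- The colored permutation whose flag carries the multichain `e`. -/
def chainWord (e : NES n →₀ ℕ) (hr : 0 < r) : CPerm n r where
  letter := Tuple.sort (sortKey e)
  inj := (Tuple.sort (sortKey e)).injective
  color i := ⟨tailSum e i % r, Nat.mod_lt _ hr⟩

def chainDeg (e : NES n →₀ ℕ) (hr : 0 < r) (i : Fin n) : ℕ :=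
  (e (flag (chainWord e hr) i) - mExp (chainWord e hr) i) / r

lemma strictMono_sortKey_chainWord (e : NES n →₀ ℕ) (hr : 0 < r) :
    StrictMono (sortKey e ∘ (chainWord e hr).letter) :=
  (Tuple.monotone_sort _).strictMono_of_injective
    ((sortKey_injective e).comp (Tuple.sort _).injective)

lemma chainWord_letter_eq {e : NES n →₀ ℕ} {w : CPerm n r} (hr : 0 < r)
    (hw : StrictMono (sortKey e ∘ w.letter)) : (chainWord e hr).letter = w.letter := by
  have := Tuple.unique_monotone (f := sortKey e)
    (σ := Equiv.ofBijective w.letter (Finite.injective_iff_bijective.1 w.inj))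
    (τ := Tuple.sort (sortKey e)) hw.monotone (Tuple.monotone_sort _)
  funext p
  exact (sortKey_injective e (congr_fun this p)).symm

lemma colorAt_chainWord (e : NES n →₀ ℕ) (hr : 0 < r) (t : ℕ) :
    colorAt (chainWord e hr) t = tailSum e t % r := by
  unfold colorAt
  split_ifs with ht
  · rfl
  · rw [tailSum_of_le e (not_lt.1 ht), Nat.zero_mod]

lemma rank_lt_rank {e : NES n →₀ ℕ} (he : IsChainE e) {S : NES n} (hS : S ∈ e.support)
    {x y : Fin n} (hx : x ∈ S.1) (hy : y ∉ S.1) : rank e y < rank e x := by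
  refine Finset.card_lt_card ⟨fun T hT => ?_, fun hsub => hy (mem_filter.1 (hsub ?_)).2⟩
  · rw [mem_filter] at hT ⊢
    exact ⟨hT.1, (he T hT.1 S hS).elim (fun h => absurd (h hT.2) hy) (fun h => h hx)⟩
  · exact mem_filter.2 ⟨hS, hx⟩

lemma flagSupported_chainWord {e : NES n →₀ ℕ} (he : IsChainE e) (hr : 0 < r) :
    FlagSupported (chainWord e hr) e := by
  intro S hS
  set w := chainWord e hr
  have hSn : S.1.card ≤ n := by simpa using S.1.card_le_univ
  have hsub : pref w S.1.card ⊆ S.1 := by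
    intro y hy
    obtain ⟨p, hp, rfl⟩ := mem_pref.1 hy
    by_contra hyS
    have hS_sub : S.1 ⊆ pref w p := by
      intro x hx
      obtain ⟨q, rfl⟩ := (Finite.injective_iff_bijective.1 w.inj).2 x
      exact letter_mem_pref.2 ((strictMono_sortKey_chainWord e hr).lt_iff_lt.1
        (sortKey_lt_sortKey.2 (Or.inl (rank_lt_rank he hS hx hyS))))
    have := Finset.card_le_card hS_sub
    rw [card_pref w p.isLt.le] at this
    omega
  have hpos := S.2.card_pos
  refine ⟨⟨S.1.card - 1, by omega⟩, Subtype.ext ?_⟩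
  change pref w (S.1.card - 1 + 1) = S.1
  rw [Nat.sub_add_cancel hpos]
  exact Finset.eq_of_subset_of_card_le hsub (by rw [card_pref w hSn])

lemma mExp_chainWord_cast {e : NES n →₀ ℕ} (he : IsChainE e) (hr : 0 < r) (i : Fin n) :
    (mExp (chainWord e hr) i : ZMod r) = e (flag (chainWord e hr) i) := by
  rw [mExp_cast_zmod, colorAt_chainWord, colorAt_chainWord,
    (flagSupported_chainWord he hr).tailSum_eq_add i]
  simp [ZMod.natCast_mod]

/-- An exponent `m_i = r` is a descent inside a block of the multichain, which is impossible. -/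
lemma mExp_chainWord_le {e : NES n →₀ ℕ} (he : IsChainE e) (hr : 0 < r) (i : Fin n) :
    mExp (chainWord e hr) i ≤ e (flag (chainWord e hr) i) := by
  by_contra! hlt
  have hle := mExp_le (chainWord e hr) i
  have hmod := (ZMod.natCast_eq_natCast_iff' _ _ _).1 (mExp_chainWord_cast he hr i)
  have hm : mExp (chainWord e hr) i = r := by
    by_contra hne
    rw [Nat.mod_eq_of_lt (by omega), Nat.mod_eq_of_lt (by omega)] at hmod
    omega
  have h0 : e (flag (chainWord e hr) i) = 0 := by
    rw [hm, Nat.mod_self, Nat.mod_eq_of_lt (by omega)] at hmod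
    exact hmod.symm
  obtain ⟨hi, hdesc⟩ := letter_succ_lt_letter_of_mExp_eq hm
  have hrank := (flagSupported_chainWord he hr).rank_letter_eq_add hi
  rw [if_pos h0, add_zero] at hrank
  have hkey := strictMono_sortKey_chainWord e hr (show i < ⟨i + 1, hi⟩ by simp [Fin.lt_def])
  simp only [Function.comp, sortKey_lt_sortKey] at hkey
  rcases hkey with hkey | ⟨-, hkey⟩
  · omega
  · exact lt_asymm hkey hdesc

lemma btdExp_chainWord {e : NES n →₀ ℕ} (he : IsChainE e) (hr : 0 < r) :
    btdExp (chainWord e hr) (chainDeg e hr) = e := by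
  ext S
  by_cases hS : S ∈ Set.range (flag (chainWord e hr))
  · obtain ⟨i, rfl⟩ := hS
    have hle := mExp_chainWord_le he hr i
    have hdvd : r ∣ e (flag (chainWord e hr) i) - mExp (chainWord e hr) i :=
      (Nat.modEq_iff_dvd' hle).1 ((ZMod.natCast_eq_natCast_iff _ _ _).1
        (mExp_chainWord_cast he hr i))
    rw [btdExp_flag, chainDeg, Nat.mul_div_cancel' hdvd, Nat.add_sub_cancel' hle]
  · rw [btdExp_of_notMem_range _ hS]
    by_contra h
    exact hS (flagSupported_chainWord he hr S (Finsupp.mem_support_iff.2 (Ne.symm h)))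

lemma strictMono_sortKey_btdExp (g : CPerm n r) (d : Fin n → ℕ) :
    StrictMono (sortKey (btdExp g d) ∘ g.letter) := by
  intro p q hpq
  refine Fin.lt_of_forall_lt_succ hpq fun t ht _ _ => ?_
  have hrank := (flagSupported_btdExp g d).rank_letter_eq_add ht
  rw [btdExp_flag] at hrank
  simp only [Function.comp, sortKey_lt_sortKey]
  split_ifs at hrank with h0
  · exact Or.inr ⟨by omega, letter_lt_letter_succ_of_mExp_eq_zero ht (by omega)⟩
  · exact Or.inl (by omega)

lemma colorAt_cast_eq_tailSum (g : CPerm n r) (d : Fin n → ℕ) (t : ℕ) :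
    (colorAt g t : ZMod r) = tailSum (btdExp g d) t := by
  induction hnt : n - t generalizing t with
  | zero => rw [tailSum_of_le _ (by omega), colorAt, dif_neg (by omega), Nat.cast_zero]
  | succ k ih =>
    have ht : t < n := by omega
    rw [(flagSupported_btdExp g d).tailSum_eq_add ⟨t, ht⟩, Nat.cast_add, ← ih (t + 1) (by omega),
      btdExp_flag]
    have := mExp_cast_zmod g ⟨t, ht⟩
    push_cast at this ⊢
    rw [this]
    simp

lemma chainWord_btdExp (g : CPerm n r) (d : Fin n → ℕ) (hr : 0 < r) :
    chainWord (btdExp g d) hr = g := by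
  refine CWord.ext (chainWord_letter_eq hr (strictMono_sortKey_btdExp g d)) (funext fun i => ?_)
  apply Fin.ext
  have := congr_arg ZMod.val (colorAt_cast_eq_tailSum g d i)
  rw [colorAt_val, ZMod.val_natCast, ZMod.val_natCast, Nat.mod_eq_of_lt (g.color i).isLt] at this
  exact this.symm

lemma chainDeg_btdExp (g : CPerm n r) (d : Fin n → ℕ) (hr : 0 < r) :
    chainDeg (btdExp g d) hr = d := by
  funext i
  rw [chainDeg, chainWord_btdExp, btdExp_flag, Nat.add_sub_cancel_left,
    Nat.mul_div_cancel_left _ hr]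

def btdExpEquiv (n : ℕ) (hr : 0 < r) :
    CPerm n r × (Fin n → ℕ) ≃ {e : NES n →₀ ℕ // IsChainE e} where
  toFun gd := ⟨btdExp gd.1 gd.2, (flagSupported_btdExp _ _).isChainE⟩
  invFun e := (chainWord e.1 hr, chainDeg e.1 hr)
  left_inv _ := Prod.ext (chainWord_btdExp _ _ hr) (chainDeg_btdExp _ _ hr)
  right_inv e := Subtype.ext (btdExp_chainWord e.2 hr)

end ChainWord

section Triangularity

variable {n r : ℕ}

def subsetWeight (S : Finset (Fin n)) : ℕ := ∑ x ∈ S, 2 ^ (x.rev : ℕ)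

lemma subsetWeight_lt {X Y : Finset (Fin n)} (hcard : X.card = Y.card) (hne : X ≠ Y)
    (h : ∀ x ∈ X, x ∉ Y → ∀ y ∈ Y, y ∉ X → x < y) : subsetWeight Y < subsetWeight X := by
  let revVal : Fin n ↪ ℕ := Fin.revPerm.toEmbedding.trans Fin.valEmbedding
  have hmap : ∀ S : Finset (Fin n), subsetWeight S = ∑ i ∈ S.map revVal, 2 ^ i := fun S => by
    simp [subsetWeight, revVal]
  obtain ⟨x, hxX, hxY⟩ : ∃ x ∈ X, x ∉ Y := by
    by_contra! hsub
    exact hne (Finset.eq_of_subset_of_card_le hsub hcard.ge)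
  rw [hmap, hmap, Finset.geomSum_lt_geomSum_iff_toColex_lt_toColex le_rfl,
    Finset.Colex.toColex_lt_toColex_iff_exists_forall_lt]
  refine ⟨revVal x, Finset.mem_map_of_mem _ hxX, by simpa using hxY, ?_⟩
  simp only [Finset.mem_map, not_exists, not_and, forall_exists_index, and_imp]
  rintro _ y hyY rfl hyX
  have := h x hxX hxY y hyY fun hy => hyX y hy rfl
  exact Fin.rev_lt_rev.2 this

def monomialWeight : (NES n →₀ ℕ) →ₗ[ℕ] ℕ :=
  Finsupp.linearCombination ℕ fun S => subsetWeight S.1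

lemma monomialWeight_single (S : NES n) (c : ℕ) :
    monomialWeight (Finsupp.single S c) = c * subsetWeight S.1 := by
  simp [monomialWeight]

/-- Between two consecutive flags in the support of `b̃_{(g,d)}` the letters of `g` ascend. -/
lemma subsetWeight_lt_flag {g : CPerm n r} {d : Fin n → ℕ} {j : Fin n} {S : NES n}
    (hcard : S.1.card = j + 1) (hcomp : ∀ T ∈ (btdExp g d).support, S.1 ⊆ T.1 ∨ T.1 ⊆ S.1)
    (hne : S ≠ flag g j) : subsetWeight S.1 < subsetWeight (flag g j).1 := by
  refine subsetWeight_lt (by rw [card_flag, hcard]) (fun h => hne (Subtype.ext h.symm)) ?_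
  intro x hxT hxS y hyS hyT
  have hbij := Finite.injective_iff_bijective.1 g.inj
  obtain ⟨p, rfl⟩ := hbij.2 x
  obtain ⟨q, rfl⟩ := hbij.2 y
  rw [letter_mem_flag] at hxT hyT
  refine Fin.lt_of_forall_lt_succ (lt_of_le_of_lt hxT (not_le.1 hyT)) fun t ht hpt htq => ?_
  refine letter_lt_letter_succ_of_mExp_eq_zero ht ?_
  suffices btdExp g d (flag g t) = 0 by rw [btdExp_flag] at this; omega
  by_contra h0
  rcases hcomp _ (Finsupp.mem_support_iff.2 h0) with hsub | hsub
  · have := letter_mem_flag.1 (hsub hyS)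
    rw [Fin.le_def] at this
    omega
  · exact hxS (hsub (letter_mem_flag.2 hpt))

def lowerSpan (E₀ : NES n →₀ ℕ) (w : ℕ) : Submodule ℂ (YRing n ⧸ SRideal n) :=
  Submodule.span ℂ {x | ∃ f, E₀ ≤ f ∧ monomialWeight f < w ∧
    x = Ideal.Quotient.mk (SRideal n) (monomial f 1)}

lemma mk_monomial_mem_lowerSpan {E₀ f : NES n →₀ ℕ} (hf : E₀ ≤ f) {w : ℕ}
    (hw : monomialWeight f < w) : Ideal.Quotient.mk (SRideal n) (monomial f 1) ∈ lowerSpan E₀ w :=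
  Submodule.subset_span ⟨f, hf, hw, rfl⟩

lemma lowerSpan_mono (E₀ : NES n →₀ ℕ) {w w' : ℕ} (h : w ≤ w') :
    lowerSpan E₀ w ≤ lowerSpan E₀ w' :=
  Submodule.span_mono fun _ ⟨f, hf, hw, hx⟩ => ⟨f, hf, by omega, hx⟩

def TriangularMul (E₀ : NES n →₀ ℕ) (x : YRing n ⧸ SRideal n) (v : NES n →₀ ℕ) : Prop :=
  ∀ f, E₀ ≤ f → x * Ideal.Quotient.mk (SRideal n) (monomial f 1) -
    Ideal.Quotient.mk (SRideal n) (monomial (f + v) 1) ∈ lowerSpan E₀ (monomialWeight (f + v))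

namespace TriangularMul

variable {E₀ : NES n →₀ ℕ} {x y : YRing n ⧸ SRideal n} {v u : NES n →₀ ℕ}

lemma mul_mem_lowerSpan (hx : TriangularMul E₀ x v) {w : ℕ} (hy : y ∈ lowerSpan E₀ w) :
    x * y ∈ lowerSpan E₀ (w + monomialWeight v) := by
  induction hy using Submodule.span_induction with
  | mem _ hy =>
    obtain ⟨f, hf, hw, rfl⟩ := hy
    rw [← sub_add_cancel (x * _) (Ideal.Quotient.mk (SRideal n) (monomial (f + v) 1))]
    have hwt : monomialWeight (f + v) < w + monomialWeight v := by rw [map_add]; omega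
    exact add_mem (lowerSpan_mono E₀ hwt.le (hx f hf))
      (mk_monomial_mem_lowerSpan (hf.trans le_self_add) hwt)
  | zero => simp
  | add _ _ _ _ h₁ h₂ => rw [mul_add]; exact add_mem h₁ h₂
  | smul c _ _ h => rw [mul_smul_comm]; exact Submodule.smul_mem _ c h

lemma one : TriangularMul E₀ 1 0 := fun f _ => by simp

lemma mul (hx : TriangularMul E₀ x v) (hy : TriangularMul E₀ y u) :
    TriangularMul E₀ (x * y) (v + u) := by
  intro f hf
  have hfuv : f + (v + u) = f + u + v := by rw [add_comm v, add_assoc]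
  have h₁ := hx.mul_mem_lowerSpan (hy f hf)
  have h₂ := hx (f + u) (hf.trans le_self_add)
  rw [← map_add, ← hfuv] at h₁
  rw [← hfuv] at h₂
  convert add_mem h₁ h₂ using 1
  ring

lemma pow (hx : TriangularMul E₀ x v) (a : ℕ) : TriangularMul E₀ (x ^ a) (a • v) := by
  induction a with
  | zero => simpa using one
  | succ a ih => rw [pow_succ, succ_nsmul]; exact ih.mul hx

lemma prod {ι : Type*} (s : Finset ι) {x : ι → YRing n ⧸ SRideal n} {v : ι → NES n →₀ ℕ}
    (h : ∀ i ∈ s, TriangularMul E₀ (x i) (v i)) :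
    TriangularMul E₀ (∏ i ∈ s, x i) (∑ i ∈ s, v i) := by
  classical
  induction s using Finset.induction_on with
  | empty => simpa using one
  | insert a s ha ih =>
    rw [Finset.prod_insert ha, Finset.sum_insert ha]
    exact (h a (mem_insert_self a s)).mul (ih fun i hi => h i (mem_insert_of_mem hi))

end TriangularMul

lemma theta_mul_monomial (j : ℕ) (f : NES n →₀ ℕ) :
    theta n r j * monomial f 1 = ∑ S with S.1.card = j, monomial (f + Finsupp.single S r) 1 := by
  rw [theta, Finset.sum_mul]
  refine Finset.sum_congr rfl fun S _ => ?_
  rw [X_pow_eq_monomial, monomial_mul, one_mul, add_comm]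

lemma triangularMul_theta (hr : 0 < r) (g : CPerm n r) (d : Fin n → ℕ) (j : Fin n) :
    TriangularMul (btdExp g d) (Ideal.Quotient.mk (SRideal n) (theta n r (j + 1)))
      (Finsupp.single (flag g j) r) := by
  intro f hf
  have hflag : flag g j ∈ (univ.filter fun S : NES n => S.1.card = j + 1) := by simp
  rw [← map_mul, theta_mul_monomial, map_sum, ← Finset.add_sum_erase _ _ hflag,
    add_sub_cancel_left]
  refine Submodule.sum_mem _ fun S hS => ?_
  obtain ⟨hne, hS⟩ := mem_erase.1 hS
  rw [mem_filter] at hS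
  by_cases hc : IsChainE (f + Finsupp.single S r)
  · refine mk_monomial_mem_lowerSpan (hf.trans le_self_add) ?_
    have hSmem : S ∈ (f + Finsupp.single S r).support := by simp; omega
    have hcomp : ∀ T ∈ (btdExp g d).support, S.1 ⊆ T.1 ∨ T.1 ⊆ S.1 := fun T hT =>
      hc S hSmem T (Finsupp.support_mono (hf.trans le_self_add) hT)
    have := subsetWeight_lt_flag hS.2 hcomp hne
    simp only [map_add, monomialWeight_single]
    have := Nat.mul_lt_mul_of_pos_left this hr
    omega
  · rw [mk_monomial_eq_zero hc]
    exact zero_mem _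

end Triangularity

lemma btp_eq_prod_theta_mul (n k r : ℕ) (g : CPerm n r) (d : Fin n → ℕ) :
    btp n k r g d = (∏ i : Fin n, theta n r (i + 1) ^ (if n - k ≤ (i : ℕ) then d i else 0)) *
      monomial (btdExp g fun i => if (i : ℕ) < n - k then d i else 0) 1 := by
  rw [btp, btd_eq_monomial]
  congr 1
  refine Finset.prod_congr rfl fun i _ => ?_
  split_ifs <;> simp

lemma mk_btp_sub_mem_lowerSpan {n r : ℕ} (k : ℕ) (hr : 0 < r) (g : CPerm n r) (d : Fin n → ℕ) :
    Ideal.Quotient.mk (SRideal n) (btp n k r g d) -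
        Ideal.Quotient.mk (SRideal n) (monomial (btdExp g d) 1) ∈
      lowerSpan (btdExp g fun i => if (i : ℕ) < n - k then d i else 0)
        (monomialWeight (btdExp g d)) := by
  set lower : Fin n → ℕ := fun i => if (i : ℕ) < n - k then d i else 0
  set upper : Fin n → ℕ := fun i => if n - k ≤ (i : ℕ) then d i else 0
  have hd : lower + upper = d := funext fun i => by
    simp only [lower, upper, Pi.add_apply]
    split_ifs <;> omega
  have htheta : TriangularMul (btdExp g lower)
      (Ideal.Quotient.mk (SRideal n) (∏ i : Fin n, theta n r (i + 1) ^ upper i))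
      (∑ i, Finsupp.single (flag g i) (r * upper i)) := by
    rw [map_prod]
    refine TriangularMul.prod _ fun i _ => ?_
    rw [map_pow, mul_comm, ← smul_eq_mul, ← Finsupp.smul_single]
    exact (triangularMul_theta hr g lower i).pow _
  have := htheta _ le_rfl
  rwa [← btdExp_add, hd, ← map_mul, ← btp_eq_prod_theta_mul] at this

variable (n) in
def btdBasis {r : ℕ} (hr : 0 < r) :
    Module.Basis (CPerm n r × (Fin n → ℕ)) ℂ (YRing n ⧸ SRideal n) :=
  (chainBasis n).reindex (btdExpEquiv n hr).symm

lemma btdBasis_apply {n r : ℕ} (hr : 0 < r) (gd : CPerm n r × (Fin n → ℕ)) :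
    btdBasis n hr gd = Ideal.Quotient.mk (SRideal n) (monomial (btdExp gd.1 gd.2) 1) := by
  simp [btdBasis, chainBasis_apply, btdExpEquiv]

lemma lowerSpan_le_span_btdBasis {n r : ℕ} (hr : 0 < r) (E₀ : NES n →₀ ℕ) (w : ℕ) :
    lowerSpan E₀ w ≤ Submodule.span ℂ
      (btdBasis n hr '' {gd | monomialWeight (btdExp gd.1 gd.2) < w}) := by
  refine Submodule.span_le.2 ?_
  rintro _ ⟨f, -, hw, rfl⟩
  by_cases hf : IsChainE f
  · have hf' : btdExp (chainWord f hr) (chainDeg f hr) = f := btdExp_chainWord hf hr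
    refine Submodule.subset_span ⟨(chainWord f hr, chainDeg f hr), ?_, ?_⟩
    · change monomialWeight (btdExp _ _) < w
      rwa [hf']
    · rw [btdBasis_apply, hf']
  · rw [SetLike.mem_coe, mk_monomial_eq_zero hf]
    exact zero_mem _

theorem btp_basis_of_SR_general (n k r : ℕ) (hr : 1 ≤ r) :
    ∃ B : Module.Basis (CPerm n r × (Fin n → ℕ)) ℂ (YRing n ⧸ SRideal n),
      ∀ gd : CPerm n r × (Fin n → ℕ),
        B gd = Ideal.Quotient.mk (SRideal n) (btp n k r gd.1 gd.2) := by
  obtain ⟨B, hB⟩ := (btdBasis n hr).exists_basis_eq_of_sub_mem_span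
    (W := fun gd => monomialWeight (btdExp gd.1 gd.2))
    (f := fun gd => Ideal.Quotient.mk (SRideal n) (btp n k r gd.1 gd.2)) fun gd => by
      rw [btdBasis_apply]
      exact lowerSpan_le_span_btdBasis hr _ _ (mk_btp_sub_mem_lowerSpan k hr gd.1 gd.2)
  exact ⟨B, congr_fun hB⟩

/-- The elements `b̃′_{(g,d)}`, for `g ∈ G_n` and `d ∈ ℤ_{≥0}^n`, form a
`ℂ`-vector space basis of the Stanley–Reisner ring `ℂ[𝓑_n*]`. -/
theorem btp_basis_of_SR (n k r : ℕ) (hr : 1 ≤ r) (hn : 1 ≤ n) (hk : k ≤ n) :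
    ∃ B : Module.Basis (CPerm n r × (Fin n → ℕ)) ℂ (YRing n ⧸ SRideal n),
      ∀ gd : CPerm n r × (Fin n → ℕ),
        B gd = Ideal.Quotient.mk (SRideal n) (btp n k r gd.1 gd.2) :=
  btp_basis_of_SR_general n k r hr

end
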